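/- For g ∈ GL(V), the following are equivalent: (a) g{x,y,z} = {gx,gy,gz} for all x,y,z ∈ V; (b) Q(gx) = g ∘ Q(x) ∘ ᵗ(g⋆) for all x ∈ V, where Q(x)y := P(x)(y⋆), and β(gx, gy) = β(x,y) for all x,y ∈ V, where β(x,y) := α(x, y⋆). In other words, Aut(V') = Str(V') ∩ O(V,β). -/

import Mathlib

noncomputable section
open scoped Classical

open Function

variable {V : Type} [AddCommGroup V] [Module ℝ V]

/-- The quadratic representation `P(x) = 2 L(x)² − L(x²)`. -/
def Pq (mul : V →ₗ[ℝ] V →ₗ[ℝ] V) (x : V) : V →ₗ[ℝ] V :=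
  2 • (mul x ∘ₗ mul x) - mul (mul x x)

/-- The Jordan inverse `x⁻¹ = P(x)⁻¹ x` (junk value `0` when `x` is not invertible). -/
def jinv (mul : V →ₗ[ℝ] V →ₗ[ℝ] V) (x : V) : V :=
  if h : Function.Bijective (Pq mul x) then (LinearEquiv.ofBijective (Pq mul x) h).symm x else 0

/-- The trace form `α(x,y) = Tr L(xy)`. -/
def αf (mul : V →ₗ[ℝ] V →ₗ[ℝ] V) (x y : V) : ℝ :=
  LinearMap.trace ℝ V (mul (mul x y))

/-- The symmetric cone `Ω = {x² : x ∈ V⁺ invertible}`. -/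
def omg (mul : V →ₗ[ℝ] V →ₗ[ℝ] V) (st : V →ₗ[ℝ] V) : Set V :=
  {y | ∃ x, st x = x ∧ Function.Bijective (Pq mul x) ∧ y = mul x x}

/-- The Jordan triple product `{x,y,z} = (xy⋆)z + x(y⋆z) − y⋆(xz)`. -/
def trip (mul : V →ₗ[ℝ] V →ₗ[ℝ] V) (st : V →ₗ[ℝ] V) (x y z : V) : V :=
  mul (mul x (st y)) z + mul x (mul (st y) z) - mul (st y) (mul x z)


/-!
If `g` preserves the triple product, it conjugates the box operator `x □ y = {x, y, ·}` into
`gx □ gy`; since `Tr (x □ y) = α(x, y⋆)` (the commutator part `[L x, L y⋆]` is traceless), `g`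
preserves `β`. Nondegeneracy of `α` then makes `ᵗ(g⋆)` the inverse of `g`, which turns the
condition on `Q` into `g (Q(x) y) = Q(gx) (gy)`, i.e. preservation of `{x, y, x}`. Polarization
in `x` recovers the full triple product from its diagonal values.
-/

section TripleProduct

variable (mul : V →ₗ[ℝ] V →ₗ[ℝ] V) (st : V →ₗ[ℝ] V)

def boxOp (x y : V) : V →ₗ[ℝ] V :=
  mul (mul x (st y)) + mul x ∘ₗ mul (st y) - mul (st y) ∘ₗ mul x

lemma boxOp_apply (x y z : V) : boxOp mul st x y z = trip mul st x y z := by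
  simp [boxOp, trip]

lemma trace_boxOp [FiniteDimensional ℝ V] (x y : V) :
    LinearMap.trace ℝ V (boxOp mul st x y) = αf mul x (st y) := by
  simp only [boxOp, map_add, map_sub, αf]
  rw [LinearMap.trace_comp_comm']
  ring

variable {mul}

lemma trip_self (hcomm : ∀ x y : V, mul x y = mul y x) (x y : V) :
    trip mul st x y x = Pq mul x (st y) := by
  rw [trip, hcomm (mul x (st y)) x, hcomm (st y) x, hcomm (st y) (mul x x)]
  simp [Pq, two_smul]

lemma trip_comm (hcomm : ∀ x y : V, mul x y = mul y x) (x y z : V) :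
    trip mul st x y z = trip mul st z y x := by
  simp only [trip]
  rw [hcomm (mul x (st y)) z, hcomm x (st y), hcomm x (mul (st y) z), hcomm (st y) z, hcomm x z]
  abel

lemma trip_add_left (x x' y z : V) :
    trip mul st (x + x') y z = trip mul st x y z + trip mul st x' y z := by
  simp only [trip, map_add, LinearMap.add_apply]
  abel

lemma trip_add_right (x y z z' : V) :
    trip mul st x y (z + z') = trip mul st x y z + trip mul st x y z' := by
  simp only [trip, map_add]
  abel

lemma trip_add_self (hcomm : ∀ x y : V, mul x y = mul y x) (x y z : V) :
    trip mul st (x + z) y (x + z) =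
      trip mul st x y x + trip mul st z y z + (2 : ℝ) • trip mul st x y z := by
  rw [trip_add_left, trip_add_right, trip_add_right, trip_comm st hcomm z y x, two_smul]
  abel

theorem trip_map_iff_Pq_map (hcomm : ∀ x y : V, mul x y = mul y x) (g : V →ₗ[ℝ] V) :
    (∀ x y z : V, g (trip mul st x y z) = trip mul st (g x) (g y) (g z)) ↔
      ∀ x y : V, g (Pq mul x (st y)) = Pq mul (g x) (st (g y)) := by
  simp only [← trip_self st hcomm]
  refine ⟨fun h x y => h x y x, fun h x y z => ?_⟩
  have hsum := h (x + z) y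
  simp only [trip_add_self st hcomm, map_add, map_smul, h] at hsum
  exact smul_right_injective V two_ne_zero (add_left_cancel hsum)

theorem αf_map_st_of_trip_map [FiniteDimensional ℝ V] {g : V →ₗ[ℝ] V} (hg : Bijective g)
    (htrip : ∀ x y z : V, g (trip mul st x y z) = trip mul st (g x) (g y) (g z)) (x y : V) :
    αf mul (g x) (st (g y)) = αf mul x (st y) := by
  let ge := LinearEquiv.ofBijective g hg
  have hconj : boxOp mul st (g x) (g y) = ge.conj (boxOp mul st x y) := by
    ext z
    obtain ⟨w, rfl⟩ := hg.2 z
    have hw : ge.symm (g w) = w := ge.symm_apply_apply w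
    simp [LinearEquiv.conj_apply_apply, boxOp_apply, hw, htrip, ge]
  rw [← trace_boxOp, ← trace_boxOp, hconj, LinearMap.trace_conj']

end TripleProduct

lemma αf_comm {mul : V →ₗ[ℝ] V →ₗ[ℝ] V} (hcomm : ∀ x y : V, mul x y = mul y x) (x y : V) :
    αf mul x y = αf mul y x := by
  rw [αf, αf, hcomm]

lemma eq_of_forall_αf_eq {mul : V →ₗ[ℝ] V →ₗ[ℝ] V} (hcomm : ∀ x y : V, mul x y = mul y x)
    (hα_nondeg : ∀ x : V, (∀ y : V, αf mul x y = 0) → x = 0) {u w : V}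
    (h : ∀ x : V, αf mul x u = αf mul x w) : u = w := by
  refine sub_eq_zero.mp (hα_nondeg _ fun y => ?_)
  have hy := h y
  rw [αf_comm hcomm]
  simp only [αf] at hy ⊢
  rw [map_sub, map_sub, map_sub, hy, sub_self]

lemma leftInverse_of_αf_st_map {mul : V →ₗ[ℝ] V →ₗ[ℝ] V} {st g tgs : V →ₗ[ℝ] V}
    (hcomm : ∀ x y : V, mul x y = mul y x)
    (hα_nondeg : ∀ x : V, (∀ y : V, αf mul x y = 0) → x = 0)
    (hst_invol : ∀ x : V, st (st x) = x)
    (htgs : ∀ x y : V, αf mul (st (g (st x))) y = αf mul x (tgs y))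
    (hβ : ∀ x y : V, αf mul (g x) (st (g y)) = αf mul x (st y)) :
    LeftInverse tgs g := fun v =>
  eq_of_forall_αf_eq hcomm hα_nondeg fun x => by
    rw [← htgs, αf_comm hcomm, hβ, hst_invol, αf_comm hcomm]

theorem stmt13_general {V : Type} [AddCommGroup V] [Module ℝ V] [FiniteDimensional ℝ V]
    (mul : V →ₗ[ℝ] V →ₗ[ℝ] V)
    (hcomm : ∀ x y : V, mul x y = mul y x)
    (st : V →ₗ[ℝ] V)
    (hst_invol : ∀ x : V, st (st x) = x)
    (hα_nondeg : ∀ x : V, (∀ y : V, αf mul x y = 0) → x = 0)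
    (g : V →ₗ[ℝ] V) (hg : Function.Bijective g)
    (tgs : V →ₗ[ℝ] V)
    (htgs : ∀ x y : V, αf mul (st (g (st x))) y = αf mul x (tgs y)) :
    (∀ x y z : V, g (trip mul st x y z) = trip mul st (g x) (g y) (g z)) ↔
      ((∀ x y : V, Pq mul (g x) (st y) = g (Pq mul x (st (tgs y)))) ∧
        ∀ x y : V, αf mul (g x) (st (g y)) = αf mul x (st y)) := by
  have hinv := leftInverse_of_αf_st_map hcomm hα_nondeg hst_invol htgs
  constructor
  · intro htrip
    have hβ := αf_map_st_of_trip_map st hg htrip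
    have hQ := (trip_map_iff_Pq_map st hcomm g).1 htrip
    refine ⟨fun x y => ?_, hβ⟩
    rw [hQ, (hinv hβ).rightInverse_of_surjective hg.2 y]
  · rintro ⟨hQ, hβ⟩
    refine (trip_map_iff_Pq_map st hcomm g).2 fun x y => ?_
    rw [hQ, hinv hβ y]

theorem stmt13 {V : Type} [AddCommGroup V] [Module ℝ V] [FiniteDimensional ℝ V]
    (mul : V →ₗ[ℝ] V →ₗ[ℝ] V) (e : V)
    (hcomm : ∀ x y : V, mul x y = mul y x)
    (hunit : ∀ x : V, mul e x = x)
    (hjordan : ∀ x y : V, mul x (mul (mul x x) y) = mul (mul x x) (mul x y))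
    (st : V →ₗ[ℝ] V)
    (hst_invol : ∀ x : V, st (st x) = x)
    (hst_mul : ∀ x y : V, st (mul x y) = mul (st x) (st y))
    (hα_nondeg : ∀ x : V, (∀ y : V, αf mul x y = 0) → x = 0)
    (hα_pos : ∀ x : V, st x = x → x ≠ 0 → 0 < αf mul x x)
    (hα_neg : ∀ x : V, st x = -x → x ≠ 0 → αf mul x x < 0)
    (g : V →ₗ[ℝ] V) (hg : Function.Bijective g)
    (tgs : V →ₗ[ℝ] V)
    (htgs : ∀ x y : V, αf mul (st (g (st x))) y = αf mul x (tgs y)) :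
    (∀ x y z : V, g (trip mul st x y z) = trip mul st (g x) (g y) (g z)) ↔
      ((∀ x y : V, Pq mul (g x) (st y) = g (Pq mul x (st (tgs y)))) ∧
        ∀ x y : V, αf mul (g x) (st (g y)) = αf mul x (st y)) :=
  stmt13_general mul hcomm st hst_invol hα_nondeg g hg tgs htgs
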